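/- arXiv:0904.4589 — 2 statements merged into one kernel-verified Lean document; each statement's English description precedes it below -/
import Mathlib

section
/- Let ρ be a density state of finite rank k. Then Tr(ρ²) equals the maximum of Σᵢ λᵢ² over all decompositions ρ = Σᵢ₌₁ᵏ λᵢρᵢ of ρ as a convex combination of k pure states ρ₁,…,ρ_k, and this maximum is attained by the spectral decomposition (mutually orthogonal pure states). -/
/-!
Expanding `ρ = ∑ lᵢ σᵢ` gives `Tr(ρ²) = ∑ᵢ lᵢ² + ∑_{i ≠ j} lᵢ lⱼ Tr(σᵢ σⱼ)`, and each
`Tr(σᵢ σⱼ)` is nonnegative, being the trace of a product of positive semidefinite matrices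
(`Tr(AB) = Tr(√B A √B)`). Hence every decomposition into pure states has `∑ lᵢ² ≤ Tr(ρ²)`.
In the spectral decomposition the pure states are mutually orthogonal, so the cross terms vanish
and equality holds; dropping the zero eigenvalues leaves exactly `rank ρ` terms.
-/

open scoped ComplexOrder

/-- A pure state: a rank-one orthogonal projection. -/
def IsPureState {n : ℕ} (ρ : Matrix (Fin n) (Fin n) ℂ) : Prop :=
  ρ.IsHermitian ∧ ρ * ρ = ρ ∧ ρ.trace = 1

open Matrix Unitary

namespace Matrix

variable {n 𝕜 : Type*} [Fintype n] [RCLike 𝕜]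

open scoped MatrixOrder in
theorem PosSemidef.trace_mul_nonneg [DecidableEq n] {A B : Matrix n n 𝕜}
    (hA : A.PosSemidef) (hB : B.PosSemidef) : 0 ≤ (A * B).trace := by
  have hsqrt : (CFC.sqrt B).IsHermitian :=
    (nonneg_iff_posSemidef.mp (CFC.sqrt_nonneg B)).isHermitian
  have hcycle : (A * B).trace = (CFC.sqrt B * A * (CFC.sqrt B)ᴴ).trace := by
    rw [hsqrt.eq, trace_mul_cycle, CFC.sqrt_mul_sqrt_self B hB.nonneg, trace_mul_comm]
  exact hcycle ▸ (hA.mul_mul_conjTranspose_same _).trace_nonneg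

theorem trace_conjStarAlgAut [DecidableEq n] (u : unitary (Matrix n n 𝕜)) (A : Matrix n n 𝕜) :
    (conjStarAlgAut 𝕜 _ u A).trace = A.trace := by
  rw [conjStarAlgAut_apply, trace_mul_cycle, coe_star_mul_self, one_mul]

theorem trace_sum_smul_mul_sum_smul {ι : Type*} [Fintype ι] (c : ι → 𝕜)
    (σ : ι → Matrix n n 𝕜) :
    ((∑ i, c i • σ i) * (∑ j, c j • σ j)).trace =
      ∑ i, ∑ j, c i * c j * (σ i * σ j).trace := by
  simp only [Finset.sum_mul_sum, trace_sum, smul_mul_smul_comm, trace_smul, smul_eq_mul]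

end Matrix

namespace IsPureState

variable {n : ℕ} {σ : Matrix (Fin n) (Fin n) ℂ}

theorem posSemidef (h : IsPureState σ) : σ.PosSemidef := by
  have h' : σᴴ * σ = σ := by rw [h.1.eq, h.2.1]
  exact h' ▸ posSemidef_conjTranspose_mul_self σ

theorem trace_mul_self (h : IsPureState σ) : (σ * σ).trace = 1 := by
  rw [h.2.1, h.2.2]

theorem conj (h : IsPureState σ) (u : unitary (Matrix (Fin n) (Fin n) ℂ)) :
    IsPureState (conjStarAlgAut ℂ _ u σ) := by
  refine ⟨isHermitian_iff_isSelfAdjoint.mpr ((isHermitian_iff_isSelfAdjoint.mp h.1).map _), ?_, ?_⟩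
  · rw [← map_mul, h.2.1]
  · rw [trace_conjStarAlgAut, h.2.2]

end IsPureState

theorem isPureState_single {n : ℕ} (i : Fin n) : IsPureState (single i i (1 : ℂ)) := by
  refine ⟨?_, ?_, ?_⟩
  · simp [IsHermitian, conjTranspose_single]
  · rw [single_mul_single_same, one_mul]
  · exact trace_single_eq_same i 1

section PureDecomposition

variable {n : ℕ} {ι : Type*} [Fintype ι] {σ : ι → Matrix (Fin n) (Fin n) ℂ}

theorem trace_sum_smul_of_isPureState (hσ : ∀ i, IsPureState (σ i)) (c : ι → ℂ) :
    (∑ i, c i • σ i).trace = ∑ i, c i := by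
  simp [trace_sum, (hσ _).2.2]

theorem trace_sq_of_orthogonal (hσ : ∀ i, IsPureState (σ i))
    (horth : ∀ i j, i ≠ j → (σ i * σ j).trace = 0) (l : ι → ℝ) :
    ((∑ i, (l i : ℂ) • σ i) * (∑ i, (l i : ℂ) • σ i)).trace = ((∑ i, l i ^ 2 : ℝ) : ℂ) := by
  rw [trace_sum_smul_mul_sum_smul]
  push_cast
  refine Finset.sum_congr rfl fun i _ => ?_
  rw [Finset.sum_eq_single i (fun j _ hji => by rw [horth i j hji.symm, mul_zero]) (by simp),
    (hσ i).trace_mul_self, mul_one, sq]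

theorem sum_sq_le_trace_sq (hσ : ∀ i, IsPureState (σ i)) {l : ι → ℝ} (hl : ∀ i, 0 ≤ l i) :
    ((∑ i, l i ^ 2 : ℝ) : ℂ) ≤
      ((∑ i, (l i : ℂ) • σ i) * (∑ i, (l i : ℂ) • σ i)).trace := by
  have hl' : ∀ i, (0 : ℂ) ≤ l i := fun i => Complex.zero_le_real.mpr (hl i)
  rw [trace_sum_smul_mul_sum_smul]
  push_cast
  refine Finset.sum_le_sum fun i _ => ?_
  calc (l i : ℂ) ^ 2 = l i * l i * (σ i * σ i).trace := by rw [(hσ i).trace_mul_self, mul_one, sq]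
    _ ≤ ∑ j, (l i : ℂ) * l j * (σ i * σ j).trace :=
      Finset.single_le_sum (f := fun j => (l i : ℂ) * l j * (σ i * σ j).trace)
        (fun j _ => mul_nonneg (mul_nonneg (hl' i) (hl' j))
          ((hσ i).posSemidef.trace_mul_nonneg (hσ j).posSemidef))
        (Finset.mem_univ i)

end PureDecomposition

namespace Matrix.IsHermitian

variable {n : ℕ} {ρ : Matrix (Fin n) (Fin n) ℂ}

noncomputable def eigenProj (hρ : ρ.IsHermitian) (i : Fin n) : Matrix (Fin n) (Fin n) ℂ :=
  conjStarAlgAut ℂ _ hρ.eigenvectorUnitary (single i i 1)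

theorem isPureState_eigenProj (hρ : ρ.IsHermitian) (i : Fin n) :
    IsPureState (hρ.eigenProj i) :=
  (isPureState_single i).conj _

theorem trace_eigenProj_mul_eigenProj (hρ : ρ.IsHermitian) {i j : Fin n} (hij : i ≠ j) :
    (hρ.eigenProj i * hρ.eigenProj j).trace = 0 := by
  rw [eigenProj, eigenProj, ← map_mul, trace_conjStarAlgAut, single_mul_single_of_ne _ _ _ _ hij,
    trace_zero]

theorem eq_sum_eigenvalues_smul_eigenProj (hρ : ρ.IsHermitian) :
    ρ = ∑ i, (hρ.eigenvalues i : ℂ) • hρ.eigenProj i := by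
  conv_lhs => rw [hρ.spectral_theorem, ← sum_single_eq_diagonal]
  simp only [map_sum, eigenProj, ← map_smul, smul_single, smul_eq_mul, mul_one,
    Function.comp_apply]
  rfl

end Matrix.IsHermitian

theorem Matrix.PosSemidef.exists_orthogonal_pure_decomposition {n k : ℕ}
    {ρ : Matrix (Fin n) (Fin n) ℂ} (hρ : ρ.PosSemidef) (hrk : ρ.rank = k) :
    ∃ (l : Fin k → ℝ) (σ : Fin k → Matrix (Fin n) (Fin n) ℂ),
      (∀ i, 0 ≤ l i) ∧ (∀ i, IsPureState (σ i)) ∧ ρ = ∑ i, (l i : ℂ) • σ i ∧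
        ∀ i j, i ≠ j → (σ i * σ j).trace = 0 := by
  have hcard : Fintype.card {i // hρ.1.eigenvalues i ≠ 0} = k := by
    rw [← hρ.1.rank_eq_card_non_zero_eigs, hrk]
  set e : Fin k → Fin n := Subtype.val ∘ (Fintype.equivFinOfCardEq hcard).symm with he
  have he_inj : e.Injective := Subtype.val_injective.comp (Equiv.injective _)
  refine ⟨hρ.1.eigenvalues ∘ e, hρ.1.eigenProj ∘ e, fun i => hρ.eigenvalues_nonneg _,
    fun i => hρ.1.isPureState_eigenProj _, ?_,
    fun i j hij => hρ.1.trace_eigenProj_mul_eigenProj (he_inj.ne hij)⟩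
  conv_lhs => rw [hρ.1.eq_sum_eigenvalues_smul_eigenProj]
  refine (Fintype.sum_of_injective e he_inj _ _ (fun i hi => ?_) fun _ => rfl).symm
  have hi0 : hρ.1.eigenvalues i = 0 := by
    by_contra h0
    exact hi ⟨Fintype.equivFinOfCardEq hcard ⟨i, h0⟩, by simp [he]⟩
  rw [hi0, Complex.ofReal_zero, zero_smul]

/-- For a density state ρ of rank k, Tr(ρ²) is the maximum of
Σᵢ λᵢ² over all decompositions ρ = Σᵢ λᵢ ρᵢ as a convex combination of k pure
states, and the maximum is attained by a decomposition into mutually orthogonal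
pure states (the spectral decomposition). -/
theorem stmt_10 (n k : ℕ)
    (ρ : Matrix (Fin n) (Fin n) ℂ)
    (hρ : ρ.PosSemidef) (htr : ρ.trace = 1) (hrk : ρ.rank = k) :
    ∃ t₀ : ℝ, (ρ * ρ).trace = (t₀ : ℂ) ∧
      IsGreatest
        {t : ℝ | ∃ (l : Fin k → ℝ) (σ : Fin k → Matrix (Fin n) (Fin n) ℂ),
          (∀ i, 0 ≤ l i) ∧ (∑ i, l i) = 1 ∧ (∀ i, IsPureState (σ i)) ∧
          ρ = ∑ i, (l i : ℂ) • σ i ∧ t = ∑ i, (l i) ^ 2} t₀ ∧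
      ∃ (l : Fin k → ℝ) (σ : Fin k → Matrix (Fin n) (Fin n) ℂ),
        (∀ i, 0 ≤ l i) ∧ (∑ i, l i) = 1 ∧ (∀ i, IsPureState (σ i)) ∧
        ρ = ∑ i, (l i : ℂ) • σ i ∧
        (∀ i j, i ≠ j → (σ i * σ j).trace = 0) ∧
        (∑ i, (l i) ^ 2) = t₀ := by
  obtain ⟨l, σ, hl, hσ, hρσ, horth⟩ := hρ.exists_orthogonal_pure_decomposition hrk
  have hsum : ∑ i, l i = 1 := by
    rw [hρσ, trace_sum_smul_of_isPureState hσ] at htr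
    exact_mod_cast htr
  have hsq : (ρ * ρ).trace = ((∑ i, l i ^ 2 : ℝ) : ℂ) := by
    rw [hρσ]
    exact trace_sq_of_orthogonal hσ horth l
  refine ⟨∑ i, l i ^ 2, hsq, ⟨⟨l, σ, hl, hsum, hσ, hρσ, rfl⟩, ?_⟩,
    l, σ, hl, hsum, hσ, hρσ, horth, rfl⟩
  rintro t ⟨m, τ, hm, -, hτ, hρτ, rfl⟩
  have hle := sum_sq_le_trace_sq hτ hm
  rw [← hρτ, hsq] at hle
  exact_mod_cast hle
end

section
/- If a trace-preserving completely positive map A on an n-dimensional Hilbert space maps n+1 pure states in general position to pure states in general position, then A is unitary: Aρ = U†ρU for some unitary U. -/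
open scoped Matrix

/-- Vectors x₁,…,x_{n+1} in ℂⁿ are in general position if any n of them are
linearly independent. -/
def InGeneralPosition {n : ℕ} (x : Fin (n + 1) → (Fin n → ℂ)) : Prop :=
  ∀ s : Finset (Fin (n + 1)), s.card = n →
    LinearIndependent ℂ (fun i : s => x i.1)

/-!
Write `Wᵢ = Vᵢᴴ`, so that `A ρ = ∑ᵢ Wᵢ ρ Wᵢᴴ`. The image of `xⱼxⱼᴴ` is the sum of the positive
rank-one matrices `(Wᵢxⱼ)(Wᵢxⱼ)ᴴ`; as it equals `yⱼyⱼᴴ`, every `Wᵢxⱼ` is a multiple `cᵢⱼ yⱼ`.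
In general position the linear relations among the `xⱼ` (and among the `yⱼ`) form a line,
spanned by some `α` (resp. `β`) with no zero entry. Applying `Wᵢ` to `∑ αⱼ xⱼ = 0` gives a
relation among the `yⱼ`, so `αⱼ cᵢⱼ = tᵢ βⱼ`. Thus on the basis `x₁, …, xₙ` all the `Wᵢ` are the
same map up to the scalar `tᵢ`: `Wᵢ = tᵢ W`, and `A ρ = T ρ Tᴴ` with `T = (∑ |tᵢ|²)^{1/2} W`.
Trace preservation now reads `Tr (TᴴT ρ) = Tr ρ` for all `ρ`, i.e. `TᴴT = 1`.
-/

open Matrix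

section RankOne

variable {ι m R : Type*} [Fintype ι] [Fintype m]

theorem Matrix.star_dotProduct_vecMulVec_mulVec [CommSemiring R] [StarRing R] (u r : m → R) :
    star r ⬝ᵥ vecMulVec u (star u) *ᵥ r = (star r ⬝ᵥ u) * star (star r ⬝ᵥ u) := by
  rw [vecMulVec_mulVec, dotProduct_smul, op_smul_eq_smul, smul_eq_mul, mul_comm,
    star_dotProduct, star_star]

variable [Field R] [PartialOrder R] [StarRing R] [StarOrderedRing R]

theorem Matrix.dotProduct_eq_zero_of_sum_vecMulVec_eq {w : ι → m → R} {y r : m → R}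
    (h : ∑ i, vecMulVec (w i) (star (w i)) = vecMulVec y (star y)) (hr : star r ⬝ᵥ y = 0)
    (i : ι) : star r ⬝ᵥ w i = 0 := by
  have hq := congrArg (fun M => star r ⬝ᵥ M *ᵥ r) h
  simp only [sum_mulVec, dotProduct_sum, star_dotProduct_vecMulVec_mulVec, hr, zero_mul] at hq
  exact congrFun (dotProduct_self_star_eq_zero.mp hq) i

theorem Matrix.exists_eq_smul_of_sum_vecMulVec_eq {w : ι → m → R} {y : m → R}
    (h : ∑ i, vecMulVec (w i) (star (w i)) = vecMulVec y (star y)) (i : ι) :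
    ∃ c : R, w i = c • y := by
  -- `r` is the component of `w i` orthogonal to `y`; if `y = 0` then `c = 0`, as `a / 0 = 0`.
  set c := (star y ⬝ᵥ w i) / (star y ⬝ᵥ y)
  set r := w i - c • y
  have hyr : star y ⬝ᵥ r = 0 := by
    rcases eq_or_ne (star y ⬝ᵥ y) 0 with hy | hy
    · simp [dotProduct_star_self_eq_zero.mp hy]
    · simp [r, c, dotProduct_sub, dotProduct_smul, div_mul_cancel₀ _ hy]
  have hry : star r ⬝ᵥ y = 0 := by rw [star_dotProduct, hyr, star_zero]
  have hrr : star r ⬝ᵥ r = 0 := by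
    rw [dotProduct_sub, dotProduct_smul, hry, dotProduct_eq_zero_of_sum_vecMulVec_eq h hry,
      smul_zero, sub_zero]
  exact ⟨c, sub_eq_zero.mp (dotProduct_star_self_eq_zero.mp hrr)⟩

end RankOne

theorem Matrix.conjTranspose_mul_vecMulVec_mul {m R : Type*} [Fintype m] [CommSemiring R]
    [StarRing R] (V : Matrix m m R) (x : m → R) :
    Vᴴ * vecMulVec x (star x) * V = vecMulVec (Vᴴ *ᵥ x) (star (Vᴴ *ᵥ x)) := by
  rw [mul_vecMulVec, vecMulVec_mul, star_mulVec, conjTranspose_conjTranspose]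

theorem Matrix.exists_forall_eq_smul_of_mulVec_eq {ι m K : Type*} [Fintype m] [Field K]
    {e : m → m → K} (he : LinearIndependent K e) {M : ι → Matrix m m K} {t : ι → K}
    {v : m → m → K} (h : ∀ i j, M i *ᵥ e j = t i • v j) : ∃ W, ∀ i, M i = t i • W := by
  classical
  set b := basisOfPiSpaceOfLinearIndependent he
  have hb : ⇑b = e := coe_basisOfPiSpaceOfLinearIndependent he
  refine ⟨LinearMap.toMatrix' (b.constr K v), fun i => toLin'.injective (b.ext fun j => ?_)⟩
  rw [toLin'_apply, toLin'_apply, smul_mulVec, LinearMap.toMatrix'_mulVec, b.constr_basis, hb, h]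

theorem Matrix.exists_sum_conjTranspose_mul_mul_eq {ι m : Type*} [Fintype ι] [Fintype m]
    {V : ι → Matrix m m ℂ} {t : ι → ℂ} {W : Matrix m m ℂ} (h : ∀ i, (V i)ᴴ = t i • W) :
    ∃ T : Matrix m m ℂ, ∀ ρ, ∑ i, (V i)ᴴ * ρ * V i = T * ρ * Tᴴ := by
  set S : ℝ := ∑ i, Complex.normSq (t i)
  refine ⟨(Real.sqrt S : ℂ) • W, fun ρ => ?_⟩
  have hV i : V i = star (t i) • Wᴴ := by
    rw [← conjTranspose_smul, ← h, conjTranspose_conjTranspose]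
  have hsq : star (Real.sqrt S : ℂ) * (Real.sqrt S : ℂ) = S := by
    rw [Complex.star_def, Complex.conj_ofReal, ← Complex.ofReal_mul,
      Real.mul_self_sqrt (Finset.sum_nonneg fun i _ => Complex.normSq_nonneg (t i))]
  calc ∑ i, (V i)ᴴ * ρ * V i = ∑ i, (Complex.normSq (t i) : ℂ) • (W * ρ * Wᴴ) := by
        refine Finset.sum_congr rfl fun i _ => ?_
        rw [h, hV, Matrix.smul_mul, Matrix.mul_smul, Matrix.smul_mul, smul_smul,
          Complex.star_def, ← Complex.normSq_eq_conj_mul_self]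
    _ = (S : ℂ) • (W * ρ * Wᴴ) := by rw [← Finset.sum_smul]; push_cast [S]; rfl
    _ = _ := by
        rw [conjTranspose_smul, Matrix.smul_mul, Matrix.mul_smul, Matrix.smul_mul, smul_smul, hsq]

theorem Matrix.conjTranspose_mul_self_eq_one_of_trace {m R : Type*} [Fintype m] [DecidableEq m]
    [CommSemiring R] [StarRing R] {T : Matrix m m R} (h : ∀ ρ, (T * ρ * Tᴴ).trace = ρ.trace) :
    Tᴴ * T = 1 := by
  refine ext_iff_trace_mul_right.mpr fun ρ => ?_
  rw [one_mul, ← h ρ, trace_mul_cycle T ρ Tᴴ]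

namespace InGeneralPosition

variable {n : ℕ} {x : Fin (n + 1) → Fin n → ℂ}

theorem eq_zero_of_sum_eq_zero (hx : InGeneralPosition x) {g : Fin (n + 1) → ℂ}
    (hg : ∑ j, g j • x j = 0) {j₀ : Fin (n + 1)} (hj₀ : g j₀ = 0) : g = 0 := by
  classical
  have hli := Fintype.linearIndependent_iff.mp (hx (Finset.univ.erase j₀) (by simp))
  have hsum : ∑ j : Finset.univ.erase j₀, g j • x j = 0 := by
    rw [Finset.sum_coe_sort (Finset.univ.erase j₀) (fun j => g j • x j),
      Finset.sum_erase _ (by simp [hj₀]), hg]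
  funext j
  by_cases hj : j = j₀
  · rw [hj, hj₀, Pi.zero_apply]
  · exact hli (fun j => g j) hsum ⟨j, by simp [hj]⟩

theorem exists_sum_eq_zero (hx : InGeneralPosition x) :
    ∃ α : Fin (n + 1) → ℂ, (∀ j, α j ≠ 0) ∧ ∑ j, α j • x j = 0 := by
  have hdep : ¬LinearIndependent ℂ x := fun h => by
    simpa using h.fintype_card_le_finrank
  obtain ⟨α, hα, j₁, hj₁⟩ := Fintype.not_linearIndependent_iff.mp hdep
  exact ⟨α, fun j hj => hj₁ (congrFun (hx.eq_zero_of_sum_eq_zero hα hj) j₁), hα⟩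

theorem exists_eq_smul_of_sum_eq_zero (hx : InGeneralPosition x) {β γ : Fin (n + 1) → ℂ}
    (hβ : ∑ j, β j • x j = 0) (hγ : ∑ j, γ j • x j = 0) {j₀ : Fin (n + 1)} (hj₀ : β j₀ ≠ 0) :
    ∃ t : ℂ, γ = t • β := by
  refine ⟨γ j₀ / β j₀, sub_eq_zero.mp (hx.eq_zero_of_sum_eq_zero (j₀ := j₀) ?_ ?_)⟩
  · simp only [Pi.sub_apply, Pi.smul_apply, sub_smul, smul_assoc, Finset.sum_sub_distrib,
      ← Finset.smul_sum, hβ, hγ, smul_zero, sub_zero]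
  · simp [div_mul_cancel₀ _ hj₀]

theorem linearIndependent_castSucc (hx : InGeneralPosition x) :
    LinearIndependent ℂ (x ∘ Fin.castSucc) := by
  refine Fintype.linearIndependent_iff.mpr fun g hg i => ?_
  have hsum : ∑ j, (Fin.snoc g 0 : Fin (n + 1) → ℂ) j • x j = 0 := by
    simpa [Fin.sum_univ_castSucc] using hg
  simpa using congrFun (hx.eq_zero_of_sum_eq_zero hsum (j₀ := Fin.last n) (by simp)) i.castSucc

end InGeneralPosition

theorem stmt_16_general (n s : ℕ)
    (A : Matrix (Fin n) (Fin n) ℂ →ₗ[ℂ] Matrix (Fin n) (Fin n) ℂ)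
    (V : Fin s → Matrix (Fin n) (Fin n) ℂ)
    (hA : ∀ ρ, A ρ = ∑ i, (V i)ᴴ * ρ * V i)
    (htr : ∀ ρ, (A ρ).trace = ρ.trace)
    (x : Fin (n + 1) → (Fin n → ℂ))
    (hx_gp : InGeneralPosition x)
    (y : Fin (n + 1) → (Fin n → ℂ))
    (hy_gp : InGeneralPosition y)
    (him : ∀ j, A (Matrix.vecMulVec (x j) (star (x j)))
      = Matrix.vecMulVec (y j) (star (y j))) :
    ∃ U : Matrix (Fin n) (Fin n) ℂ, U ∈ Matrix.unitaryGroup (Fin n) ℂ ∧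
      ∀ ρ, A ρ = Uᴴ * ρ * U := by
  open scoped ComplexOrder in
  have hc i j : ∃ c : ℂ, (V i)ᴴ *ᵥ x j = c • y j := by
    refine exists_eq_smul_of_sum_vecMulVec_eq (w := fun i => (V i)ᴴ *ᵥ x j) ?_ i
    simpa only [hA, conjTranspose_mul_vecMulVec_mul] using him j
  choose c hc using hc
  obtain ⟨α, hα0, hα⟩ := hx_gp.exists_sum_eq_zero
  obtain ⟨β, hβ0, hβ⟩ := hy_gp.exists_sum_eq_zero
  have hdep i : ∑ j, (α j * c i j) • y j = 0 := by
    simpa only [mulVec_sum, mulVec_smul, hc, smul_smul, mulVec_zero]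
      using congrArg ((V i)ᴴ *ᵥ ·) hα
  choose t ht using fun i => hy_gp.exists_eq_smul_of_sum_eq_zero hβ (hdep i) (hβ0 (Fin.last n))
  have hct i j : (V i)ᴴ *ᵥ x j = t i • (β j / α j) • y j := by
    have h := congrFun (ht i) j
    simp only [Pi.smul_apply, smul_eq_mul] at h
    rw [hc, smul_smul, mul_div_assoc', ← h, mul_div_cancel_left₀ _ (hα0 j)]
  obtain ⟨W, hW⟩ := exists_forall_eq_smul_of_mulVec_eq hx_gp.linearIndependent_castSucc
    (fun i j => hct i j.castSucc)
  obtain ⟨T, hT⟩ := exists_sum_conjTranspose_mul_mul_eq hW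
  have hTT : Tᴴ * T = 1 := conjTranspose_mul_self_eq_one_of_trace fun ρ => by
    rw [← hT, ← hA, htr]
  refine ⟨Tᴴ, ?_, fun ρ => by rw [hA, hT, conjTranspose_conjTranspose]⟩
  rw [mem_unitaryGroup_iff, star_eq_conjTranspose, conjTranspose_conjTranspose, hTT]

/-- If a trace-preserving completely positive map A on an
n-dimensional Hilbert space maps n+1 pure states in general position to pure
states in general position, then A is unitary: Aρ = U†ρU with U unitary. -/
theorem stmt_16 (n s : ℕ)
    (A : Matrix (Fin n) (Fin n) ℂ →ₗ[ℂ] Matrix (Fin n) (Fin n) ℂ)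
    (V : Fin s → Matrix (Fin n) (Fin n) ℂ)
    (hA : ∀ ρ, A ρ = ∑ i, (V i)ᴴ * ρ * V i)
    (htr : ∀ ρ, (A ρ).trace = ρ.trace)
    (x : Fin (n + 1) → (Fin n → ℂ))
    (hx_unit : ∀ j, star (x j) ⬝ᵥ x j = 1)
    (hx_gp : InGeneralPosition x)
    (y : Fin (n + 1) → (Fin n → ℂ))
    (hy_unit : ∀ j, star (y j) ⬝ᵥ y j = 1)
    (hy_gp : InGeneralPosition y)
    (him : ∀ j, A (Matrix.vecMulVec (x j) (star (x j)))
      = Matrix.vecMulVec (y j) (star (y j))) :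
    ∃ U : Matrix (Fin n) (Fin n) ℂ, U ∈ Matrix.unitaryGroup (Fin n) ℂ ∧
      ∀ ρ, A ρ = Uᴴ * ρ * U :=
  stmt_16_general n s A V hA htr x hx_gp y hy_gp him
end
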